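/- arXiv:2312.09142 — 3 statements merged into one kernel-verified Lean document; each statement's English description precedes it below -/
import Mathlib

section
/- For p ≥ 2, the function F(x) = ‖x‖^p on a real inner product space is p-hyperconvex with some constant c > 0 depending only on p: there exists c > 0 such that for all x, y and θ ∈ [0,1], ‖θx+(1-θ)y‖^p + c·min(θ,1-θ)·‖x-y‖^p ≤ θ‖x‖^p + (1-θ)‖y‖^p. -/
/-!
In a Hilbert space the parallelogram law, together with superadditivity and convexity of
`t ↦ t ^ (p / 2)`, gives the Clarkson-type midpoint inequality
`‖(x + y) / 2‖ ^ p + ‖(x - y) / 2‖ ^ p ≤ (‖x‖ ^ p + ‖y‖ ^ p) / 2`. For `θ ≤ 1 / 2` the point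
`θ x + (1 - θ) y` is the convex combination `2θ m + (1 - 2θ) y` of the midpoint `m` and `y`,
so convexity of `‖·‖ ^ p` spreads the midpoint gain `2 ^ (-p) ‖x - y‖ ^ p` over `θ`;
`θ ≥ 1 / 2` follows by swapping `x` and `y`.
-/

open Real Set

def IsHyperconvex {E : Type*} [SeminormedAddCommGroup E] [Module ℝ E] (p c : ℝ) (F : E → ℝ) :
    Prop :=
  ∀ x y : E, ∀ θ ∈ Icc (0 : ℝ) 1,
    F (θ • x + (1 - θ) • y) + c * min θ (1 - θ) * ‖x - y‖ ^ p ≤ θ * F x + (1 - θ) * F y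

section Hyperconvex

variable {E : Type*} [SeminormedAddCommGroup E] [Module ℝ E] {p c : ℝ} {F : E → ℝ}

theorem isHyperconvex_of_le_half
    (h : ∀ x y : E, ∀ θ ∈ Icc (0 : ℝ) (1 / 2),
      F (θ • x + (1 - θ) • y) + c * θ * ‖x - y‖ ^ p ≤ θ * F x + (1 - θ) * F y) :
    IsHyperconvex p c F := by
  rintro x y θ ⟨hθ₀, hθ₁⟩
  rcases le_total θ (1 / 2) with hθ | hθ
  · rw [min_eq_left (by linarith)]
    exact h x y θ ⟨hθ₀, hθ⟩
  · rw [min_eq_right (by linarith), ← norm_sub_rev, add_comm (θ • x)]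
    have := h y x (1 - θ) ⟨by linarith, by linarith⟩
    rw [sub_sub_cancel] at this
    linarith

theorem ConvexOn.isHyperconvex_of_midpoint (hF : ConvexOn ℝ univ F)
    (hmid : ∀ x y : E, F ((1 / 2 : ℝ) • (x + y)) + c * ‖x - y‖ ^ p ≤ (F x + F y) / 2) :
    IsHyperconvex p (2 * c) F := by
  refine isHyperconvex_of_le_half fun x y θ ⟨hθ₀, hθ⟩ => ?_
  have hsplit : θ • x + (1 - θ) • y = (2 * θ) • ((1 / 2 : ℝ) • (x + y)) + (1 - 2 * θ) • y := by
    module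
  have hconv := hF.2 (mem_univ ((1 / 2 : ℝ) • (x + y))) (mem_univ y)
    (by linarith : 0 ≤ 2 * θ) (by linarith : 0 ≤ 1 - 2 * θ) (by ring)
  rw [smul_eq_mul, smul_eq_mul, ← hsplit] at hconv
  linarith [mul_le_mul_of_nonneg_left (hmid x y) (by linarith : 0 ≤ 2 * θ)]

end Hyperconvex

theorem convexOn_norm_rpow {E : Type*} [SeminormedAddCommGroup E] [NormedSpace ℝ E] {p : ℝ}
    (hp : 1 ≤ p) : ConvexOn ℝ univ fun x : E => ‖x‖ ^ p := by
  refine ⟨convex_univ, fun x _ y _ a b ha hb hab => ?_⟩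
  have hnorm := (convexOn_norm convex_univ).2 (mem_univ x) (mem_univ y) ha hb hab
  have hrpow := (convexOn_rpow hp).2 (norm_nonneg x) (norm_nonneg y) ha hb hab
  exact (rpow_le_rpow (norm_nonneg _) hnorm (by linarith)).trans hrpow

theorem norm_half_add_rpow_add_norm_half_sub_rpow_le {H : Type*} [NormedAddCommGroup H]
    [InnerProductSpace ℝ H] {p : ℝ} (hp : 2 ≤ p) (x y : H) :
    ‖(1 / 2 : ℝ) • (x + y)‖ ^ p + ‖(1 / 2 : ℝ) • (x - y)‖ ^ p ≤ (‖x‖ ^ p + ‖y‖ ^ p) / 2 := by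
  have hq : 1 ≤ p / 2 := by linarith
  have hsq : ∀ a : ℝ, 0 ≤ a → a ^ p = (a ^ 2) ^ (p / 2) := fun a ha => by
    rw [← rpow_natCast, ← rpow_mul ha]
    ring_nf
  have hpar : ‖(1 / 2 : ℝ) • (x + y)‖ ^ 2 + ‖(1 / 2 : ℝ) • (x - y)‖ ^ 2 =
      1 / 2 * ‖x‖ ^ 2 + 1 / 2 * ‖y‖ ^ 2 := by
    have := parallelogram_law_with_norm ℝ x y
    rw [norm_smul, norm_smul, Real.norm_of_nonneg (by norm_num)]
    linear_combination this / 4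
  rw [hsq _ (norm_nonneg _), hsq _ (norm_nonneg _), hsq _ (norm_nonneg x), hsq _ (norm_nonneg y)]
  calc _ ≤ (‖(1 / 2 : ℝ) • (x + y)‖ ^ 2 + ‖(1 / 2 : ℝ) • (x - y)‖ ^ 2) ^ (p / 2) :=
        add_rpow_le_rpow_add (by positivity) (by positivity) hq
    _ = (1 / 2 * ‖x‖ ^ 2 + 1 / 2 * ‖y‖ ^ 2) ^ (p / 2) := by rw [hpar]
    _ ≤ 1 / 2 * (‖x‖ ^ 2) ^ (p / 2) + 1 / 2 * (‖y‖ ^ 2) ^ (p / 2) :=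
        (convexOn_rpow hq).2 (mem_Ici.2 (sq_nonneg _)) (mem_Ici.2 (sq_nonneg _))
          (by norm_num) (by norm_num) (by norm_num)
    _ = _ := by ring

theorem norm_pow_hyperconvex {H : Type*} [NormedAddCommGroup H] [InnerProductSpace ℝ H]
    (p : ℝ) (hp : 2 ≤ p) :
    ∃ c : ℝ, 0 < c ∧ ∀ x y : H, ∀ θ : ℝ, θ ∈ Set.Icc (0 : ℝ) 1 →
      ‖θ • x + (1 - θ) • y‖ ^ p + c * min θ (1 - θ) * ‖x - y‖ ^ p ≤
        θ * ‖x‖ ^ p + (1 - θ) * ‖y‖ ^ p := by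
  refine ⟨2 * 2 ^ (-p), by positivity, ?_⟩
  refine (convexOn_norm_rpow (by linarith)).isHyperconvex_of_midpoint fun x y => ?_
  have h := norm_half_add_rpow_add_norm_half_sub_rpow_le hp x y
  have hhalf : (1 / 2 : ℝ) ^ p = 2 ^ (-p) := by
    rw [one_div, inv_rpow zero_le_two, rpow_neg zero_le_two]
  rwa [norm_smul (1 / 2 : ℝ) (x - y), mul_rpow (by norm_num) (norm_nonneg _),
    Real.norm_of_nonneg (by norm_num), hhalf] at h
end

section
/- For real numbers a, b, exponent p ≥ 2, and θ ∈ [0,1], the Clarkson-type inequality |θa + (1-θ)b|^p + min(θ,1-θ)·2^{1-p}·|a-b|^p ≤ θ|a|^p + (1-θ)|b|^p holds. -/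
open Real Set

private lemma add_rpow_le_rpow_add_real {x y r : ℝ} (hx : 0 ≤ x) (hy : 0 ≤ y)
    (hr : 1 ≤ r) : x ^ r + y ^ r ≤ (x + y) ^ r := by
  lift x to NNReal using hx
  lift y to NNReal using hy
  have := NNReal.add_rpow_le_rpow_add x y hr
  exact_mod_cast this

/-- Clarkson inequality for reals, p ≥ 2. -/
private lemma clarkson_real {p : ℝ} (hp : 2 ≤ p) (a b : ℝ) :
    |(a + b) / 2| ^ p + |(a - b) / 2| ^ p ≤ (|a| ^ p + |b| ^ p) / 2 := by
  have hp1 : (1 : ℝ) ≤ p / 2 := by linarith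
  set u := |(a + b) / 2| with hu
  set v := |(a - b) / 2| with hv
  have hu0 : 0 ≤ u := abs_nonneg _
  have hv0 : 0 ≤ v := abs_nonneg _
  have key : ∀ x : ℝ, x ^ p = (x ^ 2) ^ (p / 2) → True := fun _ _ => trivial
  have sq_rpow : ∀ x : ℝ, 0 ≤ x → x ^ p = (x ^ 2) ^ (p / 2) := by
    intro x hx
    rw [← Real.rpow_natCast x 2, ← Real.rpow_mul hx]
    congr 1
    ring
  have h1 : u ^ p + v ^ p ≤ (u ^ 2 + v ^ 2) ^ (p / 2) := by
    rw [sq_rpow u hu0, sq_rpow v hv0]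
    exact add_rpow_le_rpow_add_real (sq_nonneg u) (sq_nonneg v) hp1
  have h2 : u ^ 2 + v ^ 2 = (a ^ 2 + b ^ 2) / 2 := by
    rw [hu, hv, sq_abs, sq_abs]; ring
  have h3 : ((a ^ 2 + b ^ 2) / 2) ^ (p / 2) ≤ ((a ^ 2) ^ (p / 2) + (b ^ 2) ^ (p / 2)) / 2 := by
    have hc := (convexOn_rpow hp1).2 (x := a ^ 2) (y := b ^ 2)
      (mem_Ici.2 (sq_nonneg a)) (mem_Ici.2 (sq_nonneg b))
      (by norm_num : (0:ℝ) ≤ 1/2) (by norm_num : (0:ℝ) ≤ 1/2) (by norm_num)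
    simp only [smul_eq_mul] at hc
    calc ((a ^ 2 + b ^ 2) / 2) ^ (p / 2)
        = (1/2 * (a ^ 2) + 1/2 * (b ^ 2)) ^ (p / 2) := by ring_nf
      _ ≤ 1/2 * (a ^ 2) ^ (p / 2) + 1/2 * (b ^ 2) ^ (p / 2) := hc
      _ = ((a ^ 2) ^ (p / 2) + (b ^ 2) ^ (p / 2)) / 2 := by ring
  have ha : (a ^ 2) ^ (p / 2) = |a| ^ p := by
    rw [← sq_abs, ← sq_rpow |a| (abs_nonneg a)]
  have hb : (b ^ 2) ^ (p / 2) = |b| ^ p := by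
    rw [← sq_abs, ← sq_rpow |b| (abs_nonneg b)]
  calc u ^ p + v ^ p ≤ (u ^ 2 + v ^ 2) ^ (p / 2) := h1
    _ = ((a ^ 2 + b ^ 2) / 2) ^ (p / 2) := by rw [h2]
    _ ≤ ((a ^ 2) ^ (p / 2) + (b ^ 2) ^ (p / 2)) / 2 := h3
    _ = (|a| ^ p + |b| ^ p) / 2 := by rw [ha, hb]

private lemma clarkson_aux {p : ℝ} (hp : 2 ≤ p) (a b θ : ℝ) (h0 : 0 ≤ θ)
    (h2 : θ ≤ 1/2) :
    |θ * a + (1 - θ) * b| ^ p + θ * (2 : ℝ) ^ (1 - p) * |a - b| ^ p ≤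
      θ * |a| ^ p + (1 - θ) * |b| ^ p := by
  have hp1 : (1 : ℝ) ≤ p := by linarith
  set m := (a + b) / 2 with hm
  -- step 1: triangle + convexity
  have htri : |θ * a + (1 - θ) * b| ≤ 2 * θ * |m| + (1 - 2 * θ) * |b| := by
    have : θ * a + (1 - θ) * b = 2 * θ * m + (1 - 2 * θ) * b := by rw [hm]; ring
    rw [this]
    calc |2 * θ * m + (1 - 2 * θ) * b| ≤ |2 * θ * m| + |(1 - 2 * θ) * b| := abs_add_le _ _
      _ = 2 * θ * |m| + (1 - 2 * θ) * |b| := by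
          rw [abs_mul (2 * θ) m, abs_mul (1 - 2 * θ) b,
            abs_of_nonneg (by linarith : (0:ℝ) ≤ 2 * θ),
            abs_of_nonneg (by linarith : (0:ℝ) ≤ 1 - 2 * θ)]
  have hstep1 : |θ * a + (1 - θ) * b| ^ p ≤ (2 * θ * |m| + (1 - 2 * θ) * |b|) ^ p :=
    Real.rpow_le_rpow (abs_nonneg _) htri (by linarith)
  have hconv : (2 * θ * |m| + (1 - 2 * θ) * |b|) ^ p ≤
      2 * θ * |m| ^ p + (1 - 2 * θ) * |b| ^ p := by
    have hc := (convexOn_rpow hp1).2 (x := |m|) (y := |b|)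
      (mem_Ici.2 (abs_nonneg m)) (mem_Ici.2 (abs_nonneg b))
      (by linarith : (0:ℝ) ≤ 2 * θ) (by linarith : (0:ℝ) ≤ 1 - 2 * θ) (by ring)
    simpa using hc
  have hclark := clarkson_real hp a b
  rw [← hm] at hclark
  -- rewrite the (1-p) power term
  have hD : θ * (2 : ℝ) ^ (1 - p) * |a - b| ^ p = 2 * θ * |(a - b) / 2| ^ p := by
    have h1 : |(a - b) / 2| = |a - b| / 2 := by rw [abs_div]; norm_num
    have h2' : (|a - b| / 2) ^ p = |a - b| ^ p / 2 ^ p :=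
      Real.div_rpow (abs_nonneg _) (by norm_num : (0:ℝ) ≤ 2) p
    have h3 : (2 : ℝ) ^ (1 - p) = 2 / 2 ^ p := by
      rw [Real.rpow_sub (by norm_num : (0:ℝ) < 2), Real.rpow_one]
    rw [h1, h2', h3]
    ring
  have hpow : (0:ℝ) < 2 ^ p := Real.rpow_pos_of_pos (by norm_num) p
  rw [hD]
  nlinarith [mul_le_mul_of_nonneg_left hclark (by linarith : (0:ℝ) ≤ 2 * θ)]

theorem clarkson_type_ineq (p : ℝ) (hp : 2 ≤ p) (a b θ : ℝ)
    (hθ : θ ∈ Set.Icc (0 : ℝ) 1) :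
    |θ * a + (1 - θ) * b| ^ p + min θ (1 - θ) * (2 : ℝ) ^ (1 - p) * |a - b| ^ p ≤
      θ * |a| ^ p + (1 - θ) * |b| ^ p := by
  obtain ⟨h0, h1⟩ := hθ
  rcases le_or_gt θ (1/2) with hle | hgt
  · rw [min_eq_left (by linarith)]
    exact clarkson_aux hp a b θ h0 hle
  · rw [min_eq_right (by linarith)]
    have h := clarkson_aux hp b a (1 - θ) (by linarith) (by linarith)
    have e1 : (1 - θ) * b + (1 - (1 - θ)) * a = θ * a + (1 - θ) * b := by ring
    have e2 : |b - a| = |a - b| := abs_sub_comm b a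
    rw [e1, e2] at h
    linarith
end

section
/- The function t ↦ (1/p)|t|^p + (μ/q)|t|^q on ℝ, with constants μ ≥ 0 and 2 ≤ q ≤ p, is convex, and moreover satisfies for all a, b ∈ ℝ and θ ∈ [0,1]: (1/p)|θa+(1-θ)b|^p + (μ/q)|θa+(1-θ)b|^q + min(θ,1-θ)·(2^{1-p}/p)·|a-b|^p ≤ θ[(1/p)|a|^p + (μ/q)|a|^q] + (1-θ)[(1/p)|b|^p + (μ/q)|b|^q]. -/
open Real Set

private lemma rpow_superadd {u v r : ℝ} (hu : 0 ≤ u) (hv : 0 ≤ v) (hr : 1 ≤ r) :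
    u ^ r + v ^ r ≤ (u + v) ^ r := by
  have h := NNReal.add_rpow_le_rpow_add u.toNNReal v.toNNReal hr
  have h' := (NNReal.coe_le_coe).2 h
  simpa [NNReal.coe_rpow, Real.coe_toNNReal u hu, Real.coe_toNNReal v hv] using h'

private lemma abs_rpow_convexOn {r : ℝ} (hr : 1 ≤ r) :
    ConvexOn ℝ Set.univ (fun t : ℝ => |t| ^ r) := by
  have h0 : (0 : ℝ) ≤ r := zero_le_one.trans hr
  refine ⟨convex_univ, fun a _ b _ θ η hθ hη hθη => ?_⟩
  simp only [smul_eq_mul]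
  calc |θ * a + η * b| ^ r ≤ (θ * |a| + η * |b|) ^ r := by
        apply Real.rpow_le_rpow (abs_nonneg _) _ h0
        calc |θ * a + η * b| ≤ |θ * a| + |η * b| := abs_add_le _ _
          _ = θ * |a| + η * |b| := by
              rw [abs_mul, abs_mul, abs_of_nonneg hθ, abs_of_nonneg hη]
    _ ≤ θ * |a| ^ r + η * |b| ^ r := by
        have := (convexOn_rpow hr).2 (mem_Ici.2 (abs_nonneg a))
          (mem_Ici.2 (abs_nonneg b)) hθ hη hθη
        simpa using this

private lemma rpow_add_le_two_rpow {u v r : ℝ} (hu : 0 ≤ u) (hv : 0 ≤ v) (hr : 1 ≤ r) :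
    (u + v) ^ r ≤ 2 ^ (r - 1) * (u ^ r + v ^ r) := by
  have hmid : ((1/2 : ℝ) * u + (1/2 : ℝ) * v) ^ r ≤ (1/2) * u ^ r + (1/2) * v ^ r := by
    have := (convexOn_rpow hr).2 (mem_Ici.2 hu) (mem_Ici.2 hv)
      (by norm_num : (0:ℝ) ≤ 1/2) (by norm_num : (0:ℝ) ≤ 1/2) (by norm_num)
    simpa using this
  have h2 : (u + v) ^ r = 2 ^ r * ((1/2 : ℝ) * u + (1/2 : ℝ) * v) ^ r := by
    rw [← Real.mul_rpow (by norm_num) (by positivity)]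
    ring_nf
  rw [h2]
  calc 2 ^ r * ((1/2 : ℝ) * u + (1/2 : ℝ) * v) ^ r
      ≤ 2 ^ r * ((1/2) * u ^ r + (1/2) * v ^ r) :=
        mul_le_mul_of_nonneg_left hmid (Real.rpow_nonneg (by norm_num) r)
    _ = 2 ^ (r - 1) * (u ^ r + v ^ r) := by
        rw [Real.rpow_sub (by norm_num : (0:ℝ) < 2) r 1, Real.rpow_one]; ring

private lemma clarkson {p : ℝ} (hp : 2 ≤ p) (x y : ℝ) :
    |x + y| ^ p + |x - y| ^ p ≤ 2 ^ (p - 1) * (|x| ^ p + |y| ^ p) := by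
  have hr : (1 : ℝ) ≤ p / 2 := by linarith
  have key : ∀ A : ℝ, 0 ≤ A → A ^ p = (A ^ (2:ℕ)) ^ (p / 2) := by
    intro A hA
    rw [← Real.rpow_natCast_mul hA 2 (p / 2)]
    congr 1
    push_cast
    ring
  have h1 : |x + y| ^ p + |x - y| ^ p ≤ ((x + y) ^ (2:ℕ) + (x - y) ^ (2:ℕ)) ^ (p / 2) := by
    rw [key _ (abs_nonneg (x + y)), key _ (abs_nonneg (x - y)), sq_abs, sq_abs]
    exact rpow_superadd (by positivity) (by positivity) hr
  have h2 : ((x + y) ^ (2:ℕ) + (x - y) ^ (2:ℕ)) = 2 * (x ^ (2:ℕ) + y ^ (2:ℕ)) := by ring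
  have h3 : (2 * (x ^ (2:ℕ) + y ^ (2:ℕ))) ^ (p / 2)
      = 2 ^ (p / 2) * (x ^ (2:ℕ) + y ^ (2:ℕ)) ^ (p / 2) :=
    Real.mul_rpow (by norm_num) (by positivity)
  have h4 : (x ^ (2:ℕ) + y ^ (2:ℕ)) ^ (p / 2)
      ≤ 2 ^ (p / 2 - 1) * ((x ^ (2:ℕ)) ^ (p / 2) + (y ^ (2:ℕ)) ^ (p / 2)) :=
    rpow_add_le_two_rpow (by positivity) (by positivity) hr
  have hx : (x ^ (2:ℕ)) ^ (p / 2) = |x| ^ p := by rw [key _ (abs_nonneg x), sq_abs]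
  have hy : (y ^ (2:ℕ)) ^ (p / 2) = |y| ^ p := by rw [key _ (abs_nonneg y), sq_abs]
  have h5 : (2:ℝ) ^ (p / 2) * 2 ^ (p / 2 - 1) = 2 ^ (p - 1) := by
    rw [← Real.rpow_add (by norm_num : (0:ℝ) < 2)]
    ring_nf
  calc |x + y| ^ p + |x - y| ^ p
      ≤ ((x + y) ^ (2:ℕ) + (x - y) ^ (2:ℕ)) ^ (p / 2) := h1
    _ = 2 ^ (p / 2) * (x ^ (2:ℕ) + y ^ (2:ℕ)) ^ (p / 2) := by rw [h2, h3]
    _ ≤ 2 ^ (p / 2) * (2 ^ (p / 2 - 1) * ((x ^ (2:ℕ)) ^ (p / 2) + (y ^ (2:ℕ)) ^ (p / 2))) :=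
        mul_le_mul_of_nonneg_left h4 (Real.rpow_nonneg (by norm_num) _)
    _ = 2 ^ (p - 1) * (|x| ^ p + |y| ^ p) := by rw [hx, hy, ← mul_assoc, h5]

private lemma double_phase_convex {p q μ : ℝ} (hq : 2 ≤ q) (hqp : q ≤ p) (hμ : 0 ≤ μ) :
    ConvexOn ℝ Set.univ (fun t : ℝ => (1 / p) * |t| ^ p + (μ / q) * |t| ^ q) := by
  have hp0 : (0 : ℝ) < p := by linarith
  have hq0 : (0 : ℝ) < q := by linarith
  have hP := abs_rpow_convexOn (by linarith : (1:ℝ) ≤ p)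
  have hQ := abs_rpow_convexOn (by linarith : (1:ℝ) ≤ q)
  have hcp : (0 : ℝ) ≤ 1 / p := by positivity
  have hcq : (0 : ℝ) ≤ μ / q := by positivity
  refine ⟨convex_univ, fun a ha b hb θ η hθ hη hθη => ?_⟩
  have h1 := hP.2 ha hb hθ hη hθη
  have h2 := hQ.2 ha hb hθ hη hθη
  simp only [smul_eq_mul] at *
  nlinarith [mul_le_mul_of_nonneg_left h1 hcp, mul_le_mul_of_nonneg_left h2 hcq]

private lemma aux_half {p q μ : ℝ} (hq : 2 ≤ q) (hqp : q ≤ p) (hμ : 0 ≤ μ)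
    (a b θ : ℝ) (hθ0 : 0 ≤ θ) (hθh : θ ≤ 1/2) :
    (1 / p) * |θ * a + (1 - θ) * b| ^ p + (μ / q) * |θ * a + (1 - θ) * b| ^ q +
        θ * ((2 : ℝ) ^ (1 - p) / p) * |a - b| ^ p ≤
      θ * ((1 / p) * |a| ^ p + (μ / q) * |a| ^ q) +
        (1 - θ) * ((1 / p) * |b| ^ p + (μ / q) * |b| ^ q) := by
  have hp0 : (0 : ℝ) < p := by linarith
  have hq0 : (0 : ℝ) < q := by linarith
  set c : ℝ := (a + b) / 2 with hc
  -- convexity step: θa+(1-θ)b = (2θ)c + (1-2θ)b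
  have hconv := double_phase_convex hq hqp hμ
  have hC0 := hconv.2 (Set.mem_univ c) (Set.mem_univ b)
    (by linarith : (0:ℝ) ≤ 2 * θ) (by linarith : (0:ℝ) ≤ 1 - 2 * θ) (by ring)
  simp only [smul_eq_mul] at hC0
  have hcomb : (2 * θ) * c + (1 - 2 * θ) * b = θ * a + (1 - θ) * b := by
    rw [hc]; ring
  rw [hcomb] at hC0
  -- Clarkson step: 2|c|^p + 2^(1-p)|a-b|^p ≤ |a|^p + |b|^p
  have hclark := clarkson (le_trans hq hqp) a b
  have hcp : |c| ^ p = |a + b| ^ p / 2 ^ p := by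
    rw [hc, abs_div, abs_two, Real.div_rpow (abs_nonneg _) (by norm_num)]
  have h2p : (2:ℝ) ^ (1 - p) = 2 / 2 ^ p := by
    rw [Real.rpow_sub (by norm_num : (0:ℝ) < 2) 1 p, Real.rpow_one]
  have h2ppos : (0:ℝ) < (2:ℝ) ^ p := Real.rpow_pos_of_pos (by norm_num) p
  have hA : 2 * |c| ^ p + 2 ^ (1 - p) * |a - b| ^ p ≤ |a| ^ p + |b| ^ p := by
    have hmul : 2 ^ (1 - p) * (|a + b| ^ p + |a - b| ^ p)
        ≤ 2 ^ (1 - p) * (2 ^ (p - 1) * (|a| ^ p + |b| ^ p)) :=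
      mul_le_mul_of_nonneg_left hclark (Real.rpow_nonneg (by norm_num) _)
    have hcancel : (2:ℝ) ^ (1 - p) * 2 ^ (p - 1) = 1 := by
      rw [← Real.rpow_add (by norm_num : (0:ℝ) < 2)]; norm_num
    have : 2 ^ (1 - p) * (|a + b| ^ p + |a - b| ^ p) ≤ |a| ^ p + |b| ^ p := by
      calc 2 ^ (1 - p) * (|a + b| ^ p + |a - b| ^ p)
          ≤ 2 ^ (1 - p) * (2 ^ (p - 1) * (|a| ^ p + |b| ^ p)) := hmul
        _ = |a| ^ p + |b| ^ p := by rw [← mul_assoc, hcancel, one_mul]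
    have h2c : 2 * |c| ^ p = 2 ^ (1 - p) * |a + b| ^ p := by
      rw [hcp, h2p]; field_simp
    linarith [this, h2c.le, h2c.ge]
  -- midpoint step for q
  have hB : 2 * |c| ^ q ≤ |a| ^ q + |b| ^ q := by
    have := (abs_rpow_convexOn (by linarith : (1:ℝ) ≤ q)).2
      (Set.mem_univ a) (Set.mem_univ b)
      (by norm_num : (0:ℝ) ≤ 1/2) (by norm_num : (0:ℝ) ≤ 1/2) (by norm_num)
    simp only [smul_eq_mul] at this
    have hcm : (1/2 : ℝ) * a + (1/2 : ℝ) * b = c := by rw [hc]; ring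
    rw [hcm] at this
    linarith
  -- combine
  have hAθ := mul_le_mul_of_nonneg_left hA (by positivity : (0:ℝ) ≤ θ / p)
  have hBθ := mul_le_mul_of_nonneg_left hB (by positivity : (0:ℝ) ≤ θ * μ / q)
  ring_nf at hC0 hAθ hBθ ⊢
  linarith

theorem double_phase_integrand_hyperconvex (p q μ : ℝ) (hq : 2 ≤ q) (hqp : q ≤ p)
    (hμ : 0 ≤ μ) :
    ConvexOn ℝ Set.univ (fun t : ℝ => (1 / p) * |t| ^ p + (μ / q) * |t| ^ q) ∧
    ∀ a b θ : ℝ, θ ∈ Set.Icc (0 : ℝ) 1 →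
      (1 / p) * |θ * a + (1 - θ) * b| ^ p + (μ / q) * |θ * a + (1 - θ) * b| ^ q +
          min θ (1 - θ) * ((2 : ℝ) ^ (1 - p) / p) * |a - b| ^ p ≤
        θ * ((1 / p) * |a| ^ p + (μ / q) * |a| ^ q) +
          (1 - θ) * ((1 / p) * |b| ^ p + (μ / q) * |b| ^ q) := by
  refine ⟨double_phase_convex hq hqp hμ, fun a b θ hθ => ?_⟩
  obtain ⟨hθ0, hθ1⟩ := hθ
  rcases le_or_gt θ (1/2) with hle | hgt
  · rw [min_eq_left (by linarith)]
    exact aux_half hq hqp hμ a b θ hθ0 hle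
  · rw [min_eq_right (by linarith)]
    have h := aux_half hq hqp hμ b a (1 - θ) (by linarith) (by linarith)
    have e1 : (1 - θ) * b + (1 - (1 - θ)) * a = θ * a + (1 - θ) * b := by ring
    rw [e1, abs_sub_comm b a] at h
    linarith
end
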